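/- arXiv:2405.18089 — 2 statements merged into one kernel-verified Lean document; each statement's English description precedes it below -/
import Mathlib

section
/- Let A : ℝ^d → ℝ^d be an invertible linear map and suppose the matching model gives the noise-free relation E[yᵢ | xᵢ = x] = A⁻¹(∇w*(x) − b₀), where w*(x) = w₀(x) + xᵀb₀ with w₀ strictly convex and differentiable. If there exist points x₁, …, x_{d+1} at which the vectors ∇w*(x₁) − ∇w*(x₂), …, ∇w*(x_d) − ∇w*(x_{d+1}) are linearly independent, then A and b₀ are uniquely determined by the functions x ↦ E[y | x] and x ↦ w*(x). -/
open scoped Matrix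

/-- The gradient of `f : ℝ^d → ℝ`, as the vector of partial derivatives. -/
noncomputable def pgrad {d : ℕ} (f : (Fin d → ℝ) → ℝ) (x : Fin d → ℝ) : Fin d → ℝ :=
  fun i => fderiv ℝ f x (Pi.single i 1)

/-- Identification of the matching model: if two parameter triples `(A, b₀, w₀)` and
`(Ã, b̃₀, w̃₀)` generate the same wage function `w*(x) = w₀(x) + xᵀb₀` and the same
conditional mean `E[y|x] = A⁻¹(∇w*(x) − b₀)`, and the gradient differences at
`d + 1` points are linearly independent, then `A = Ã`, `b₀ = b̃₀`, and `w₀ − w̃₀`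
is constant. -/
theorem stmt_7 {d : ℕ} (wstar : (Fin d → ℝ) → ℝ) (g : (Fin d → ℝ) → (Fin d → ℝ))
    (A A' : Matrix (Fin d) (Fin d) ℝ) (hA : IsUnit A) (hA' : IsUnit A')
    (b b' : Fin d → ℝ) (w₀ w₀' : (Fin d → ℝ) → ℝ)
    (hw₀c : StrictConvexOn ℝ Set.univ w₀) (hw₀'c : StrictConvexOn ℝ Set.univ w₀')
    (hw₀d : Differentiable ℝ w₀) (hw₀'d : Differentiable ℝ w₀')
    (hws : ∀ x, wstar x = w₀ x + x ⬝ᵥ b) (hws' : ∀ x, wstar x = w₀' x + x ⬝ᵥ b')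
    (hg : ∀ x, g x = A⁻¹.mulVec (pgrad wstar x - b))
    (hg' : ∀ x, g x = A'⁻¹.mulVec (pgrad wstar x - b'))
    (xs : Fin (d + 1) → (Fin d → ℝ))
    (hli : LinearIndependent ℝ
      (fun j : Fin d => pgrad wstar (xs j.castSucc) - pgrad wstar (xs j.succ))) :
    A = A' ∧ b = b' ∧ ∃ c : ℝ, ∀ x, w₀ x - w₀' x = c := by
  have hAd : IsUnit A.det := (Matrix.isUnit_iff_isUnit_det A).1 hA
  have hA'd : IsUnit A'.det := (Matrix.isUnit_iff_isUnit_det A').1 hA'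
  have key : ∀ x, A⁻¹.mulVec (pgrad wstar x - b) = A'⁻¹.mulVec (pgrad wstar x - b') := by
    intro x; rw [← hg, hg']
  set v : Fin d → (Fin d → ℝ) :=
    fun j => pgrad wstar (xs j.castSucc) - pgrad wstar (xs j.succ) with hv
  have hdiff : ∀ j, A⁻¹.mulVec (v j) = A'⁻¹.mulVec (v j) := by
    intro j
    have : v j = (pgrad wstar (xs j.castSucc) - b) - (pgrad wstar (xs j.succ) - b) := by
      simp [hv]
    have h2 : v j = (pgrad wstar (xs j.castSucc) - b') - (pgrad wstar (xs j.succ) - b') := by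
      simp [hv]
    calc A⁻¹.mulVec (v j)
        = A⁻¹.mulVec (pgrad wstar (xs j.castSucc) - b) -
            A⁻¹.mulVec (pgrad wstar (xs j.succ) - b) := by rw [this, Matrix.mulVec_sub]
      _ = A'⁻¹.mulVec (pgrad wstar (xs j.castSucc) - b') -
            A'⁻¹.mulVec (pgrad wstar (xs j.succ) - b') := by rw [key, key]
      _ = A'⁻¹.mulVec (v j) := by rw [← Matrix.mulVec_sub, ← h2]
  have hspan : Submodule.span ℝ (Set.range v) = ⊤ :=
    hli.span_eq_top_of_card_eq_finrank' (by simp)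
  have hinv : A⁻¹ = A'⁻¹ := by
    have hlm : Matrix.toLin' A⁻¹ = Matrix.toLin' A'⁻¹ := by
      apply LinearMap.ext_on hspan
      rintro _ ⟨j, rfl⟩
      simpa [Matrix.toLin'_apply] using hdiff j
    exact Matrix.toLin'.injective hlm
  have hAA' : A = A' := by
    have h1 := Matrix.nonsing_inv_nonsing_inv A hAd
    have h2 := Matrix.nonsing_inv_nonsing_inv A' hA'd
    rw [← h1, ← h2, hinv]
  have hbb' : b = b' := by
    have h := key 0
    rw [hAA'] at h
    have := congrArg (A'.mulVec) h
    rw [Matrix.mulVec_mulVec, Matrix.mulVec_mulVec, Matrix.mul_nonsing_inv A' hA'd,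
      Matrix.one_mulVec, Matrix.one_mulVec] at this
    exact sub_right_injective this
  exact ⟨hAA', hbb', 0, fun x => by
    have h1 := hws x
    have h2 := hws' x
    rw [hbb'] at h1
    linarith⟩
end

section
/- Let ρ_x, ρ_y ∈ (−1,1), δ > 0, and define the 2×2 matrix J = (1/√(1 + 2δ(ρ_xρ_y + √(1−ρ_y²)√(1−ρ_x²)) + δ²)) · [[1 + δ√(1−ρ_y²)/√(1−ρ_x²), δ(ρ_y − ρ_x√(1−ρ_y²)/√(1−ρ_x²))], [ρ_y − ρ_x√(1−ρ_y²)/√(1−ρ_x²), δ + √(1−ρ_y²)/√(1−ρ_x²)]]. Then J Σ_x Jᵀ = Σ_y, where Σ_x = [[1, ρ_x],[ρ_x, 1]] and Σ_y = [[1, ρ_y],[ρ_y, 1]]. -/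
/-!
Factor `Σ_ρ = L_ρ L_ρᵀ` with `L_ρ = [[1, 0], [ρ, √(1-ρ²)]]`. Then `J L_x = L_y R` with
`R = (I + δ R₀) / s`, where `s` is the normaliser in `J` and `R₀` is the rotation with cosine
`k = ρ_x ρ_y + √(1-ρ_x²)√(1-ρ_y²)`. `R` is orthogonal because
`(I + δ R₀)(I + δ R₀)ᵀ = (1 + 2δk + δ²) I = s² I`, hence
`J Σ_x Jᵀ = (J L_x)(J L_x)ᵀ = L_y R Rᵀ L_yᵀ = Σ_y`.
-/

open Real

namespace Matrix

theorem mul_mul_transpose_mul_transpose_eq {m n l k α : Type*} [Fintype n] [Fintype l]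
    [Fintype k] [CommSemiring α] [DecidableEq l] {J : Matrix m n α} {L : Matrix n k α}
    {M : Matrix m l α} {R : Matrix l k α} (hJ : J * L = M * R) (hR : R * Rᵀ = 1) :
    J * (L * Lᵀ) * Jᵀ = M * Mᵀ := by
  calc J * (L * Lᵀ) * Jᵀ = (J * L) * (J * L)ᵀ := by
        simp only [transpose_mul, Matrix.mul_assoc]
    _ = M * (R * Rᵀ) * Mᵀ := by simp only [hJ, transpose_mul, Matrix.mul_assoc]
    _ = M * Mᵀ := by rw [hR, Matrix.mul_one]

theorem rotation_mul_transpose {α : Type*} [CommRing α] (c d : α) :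
    !![c, d; -d, c] * !![c, d; -d, c]ᵀ = (c ^ 2 + d ^ 2) • (1 : Matrix (Fin 2) (Fin 2) α) := by
  ext i j
  fin_cases i <;> fin_cases j <;> simp [mul_apply, Fin.sum_univ_two, sq, mul_comm, add_comm]

theorem corr_eq_mul_transpose {α : Type*} [CommRing α] {ρ a : α} (ha : a ^ 2 = 1 - ρ ^ 2) :
    !![1, ρ; ρ, 1] = !![1, 0; ρ, a] * !![1, 0; ρ, a]ᵀ := by
  ext i j
  fin_cases i <;> fin_cases j <;> simp [mul_apply, Fin.sum_univ_two]
  linear_combination -ha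

end Matrix

open Matrix

theorem assignment_mul_cholesky {K : Type*} [Field K] {ρx ρy δ a b : K} (ha : a ≠ 0) (ha2 : a ^ 2 = 1 - ρx ^ 2)
    (hb2 : b ^ 2 = 1 - ρy ^ 2) :
    !![1 + δ * b / a, δ * (ρy - ρx * b / a); ρy - ρx * b / a, δ + b / a] * !![1, 0; ρx, a] =
      !![1, 0; ρy, b] *
        !![1 + δ * (ρx * ρy + b * a), δ * (a * ρy - b * ρx);
          -(δ * (a * ρy - b * ρx)), 1 + δ * (ρx * ρy + b * a)] := by
  ext i j
  fin_cases i <;> fin_cases j <;> simp [mul_apply, Fin.sum_univ_two] <;> field_simp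
  · linear_combination (-δ * b) * ha2
  · linear_combination (-a * δ * ρx) * hb2
  · linear_combination (-δ * a) * hb2

/-- The assignment matrix `J` of the quadratic-Gaussian matching model satisfies
`J Σ_x Jᵀ = Σ_y`. -/
theorem stmt_13 (ρx ρy : ℝ) (hρx : ρx ∈ Set.Ioo (-1 : ℝ) 1) (hρy : ρy ∈ Set.Ioo (-1 : ℝ) 1)
    (δ : ℝ) (hδ : 0 < δ)
    (J : Matrix (Fin 2) (Fin 2) ℝ)
    (hJ : J = (1 / Real.sqrt (1 + 2 * δ * (ρx * ρy + Real.sqrt (1 - ρy ^ 2) * Real.sqrt (1 - ρx ^ 2)) + δ ^ 2)) •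
      !![1 + δ * Real.sqrt (1 - ρy ^ 2) / Real.sqrt (1 - ρx ^ 2),
         δ * (ρy - ρx * Real.sqrt (1 - ρy ^ 2) / Real.sqrt (1 - ρx ^ 2));
         ρy - ρx * Real.sqrt (1 - ρy ^ 2) / Real.sqrt (1 - ρx ^ 2),
         δ + Real.sqrt (1 - ρy ^ 2) / Real.sqrt (1 - ρx ^ 2)]) :
    J * !![(1 : ℝ), ρx; ρx, 1] * J.transpose = !![(1 : ℝ), ρy; ρy, 1] := by
  obtain ⟨hx₁, hx₂⟩ := hρx
  obtain ⟨hy₁, hy₂⟩ := hρy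
  set a := √(1 - ρx ^ 2)
  set b := √(1 - ρy ^ 2)
  set k := ρx * ρy + b * a
  set e := a * ρy - b * ρx
  have ha : a ^ 2 = 1 - ρx ^ 2 := sq_sqrt (by nlinarith)
  have hb : b ^ 2 = 1 - ρy ^ 2 := sq_sqrt (by nlinarith)
  have ha₀ : a ≠ 0 := (sqrt_pos.2 (by nlinarith)).ne'
  have hk : -1 < k := by nlinarith [mul_nonneg (sqrt_nonneg (1 - ρy ^ 2)) (sqrt_nonneg (1 - ρx ^ 2))]
  have hq : 0 < 1 + 2 * δ * k + δ ^ 2 := by nlinarith [sq_nonneg (1 - δ)]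
  set s := √(1 + 2 * δ * k + δ ^ 2)
  have hs : s ^ 2 = 1 + 2 * δ * k + δ ^ 2 := sq_sqrt hq.le
  have hs₀ : s ≠ 0 := (sqrt_pos.2 hq).ne'
  -- `k² + e² = (a² + ρx²)(b² + ρy²) = 1`
  have hN : (1 + δ * k) ^ 2 + (δ * e) ^ 2 = s ^ 2 := by
    linear_combination (δ ^ 2 * (b ^ 2 + ρy ^ 2)) * ha + δ ^ 2 * hb - hs
  have hR : ((1 / s) • !![1 + δ * k, δ * e; -(δ * e), 1 + δ * k]) *
      ((1 / s) • !![1 + δ * k, δ * e; -(δ * e), 1 + δ * k])ᵀ = 1 := by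
    rw [transpose_smul, Matrix.smul_mul, Matrix.mul_smul, rotation_mul_transpose, hN, smul_smul,
      smul_smul, show 1 / s * (1 / s) * s ^ 2 = 1 by field_simp, one_smul]
  rw [hJ, corr_eq_mul_transpose ha, corr_eq_mul_transpose hb]
  refine mul_mul_transpose_mul_transpose_eq ?_ hR
  rw [Matrix.smul_mul, assignment_mul_cholesky ha₀ ha hb, Matrix.mul_smul]
end
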